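/- arXiv:1010.0661 — 2 statements merged into one kernel-verified Lean document; each statement's English description precedes it below -/
import Mathlib

section
/- Let Φ : U → ℝⁿ and φ : U → ℝ^{d−n+1} be C² on open U ⊂ ℝ^d, and let Y_i, Y_j be coordinate vector fields directions annihilating φ (i.e. Y_iφ = Y_jφ = 0, with Y_i, Y_j constant-coefficient after a choice of adapted coordinates). With DΦ defined by ⟨DΦ, z⟩ := det [[0, 0, ∂_yφ],[z, Φ, ∂_yΦ]], one has ⟨Y_i(DΦ)(y), Y_jΦ(y)⟩ = −⟨DΦ(y), Y_iY_jΦ(y)⟩ for all y ∈ U. -/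
/-!
`z ↦ ⟨DΦ(y), z⟩` is linear, so `DΦ` is a `C¹` family `L(y)` of linear functionals on `ℝⁿ`.
For `z = ∂_w Φ(y)` the first column of the determinant is `∑ₖ wₖ` times the derivative columns,
since on the `φ`-rows that combination is `∂_w φ(y) = 0`; hence `L(y)(∂_w Φ(y)) = 0` on all of `U`.
Differentiating this identity along `v` by the product rule gives
`(∂_v L)(∂_w Φ) + L(∂_v ∂_w Φ) = 0`.
-/

/-- `⟨DΦ(y), z⟩ := det [[0, 0, ∂φ(y)],[z, Φ(y), ∂Φ(y)]]`. -/
noncomputable def Dop {d n m : ℕ} (h : m + n = d + 2)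
    (Φ : (Fin d → ℝ) → Fin n → ℝ) (φ : (Fin d → ℝ) → Fin m → ℝ)
    (y : Fin d → ℝ) (z : Fin n → ℝ) : ℝ :=
  Matrix.det (Matrix.of fun (r c : Fin (d + 2)) =>
    Fin.addCases (motive := fun _ => ℝ)
      (fun i : Fin m =>
        Fin.cases (0 : ℝ)
          (fun c' : Fin (d + 1) =>
            Fin.cases (0 : ℝ)
              (fun j : Fin d => fderiv ℝ (fun y' => φ y' i) y (Pi.single j 1)) c') c)
      (fun i : Fin n =>
        Fin.cases (z i)
          (fun c' : Fin (d + 1) =>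
            Fin.cases (Φ y i)
              (fun j : Fin d => fderiv ℝ (fun y' => Φ y' i) y (Pi.single j 1)) c') c)
      (Fin.cast h.symm r))

open Filter Topology

section

variable {𝕜 E F G ι : Type*} [NontriviallyNormedField 𝕜] [NormedAddCommGroup E] [NormedSpace 𝕜 E]
  [NormedAddCommGroup F] [NormedSpace 𝕜 F] [NormedAddCommGroup G] [NormedSpace 𝕜 G]
  [Fintype ι] [DecidableEq ι]

theorem fderiv_clm_apply_const_eq_neg {L : E → F →L[𝕜] G} {g : E → F} {y : E}
    (hL : DifferentiableAt 𝕜 L y) (hg : DifferentiableAt 𝕜 g y)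
    (hLg : ∀ᶠ x in 𝓝 y, L x (g x) = 0) (v : E) :
    fderiv 𝕜 (fun x => L x (g y)) y v = -L y (fderiv 𝕜 g y v) := by
  have hsub : (fun x => L x (g y)) =ᶠ[𝓝 y] fun x => L x (g y - g x) := by
    filter_upwards [hLg] with x hx
    rw [map_sub, hx, sub_zero]
  have hderiv := hL.hasFDerivAt.clm_apply ((hasFDerivAt_const (g y) y).fun_sub hg.hasFDerivAt)
  rw [hsub.fderiv_eq, hderiv.fderiv]
  simp

theorem ContDiffOn.fderiv_apply_of_isOpen {f : E → F} {s : Set E} {m n : WithTop ℕ∞}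
    (hf : ContDiffOn 𝕜 n f s) (hs : IsOpen s) (hmn : m + 1 ≤ n) (u : E) :
    ContDiffOn 𝕜 m (fun x => fderiv 𝕜 f x u) s :=
  (hf.fderiv_of_isOpen hs hmn).clm_apply contDiffOn_const

theorem ContinuousLinearMap.apply_eq_sum_smul_single (f : (ι → 𝕜) →L[𝕜] G) (w : ι → 𝕜) :
    f w = ∑ j, w j • f (Pi.single j 1) := by
  conv_lhs => rw [← (Pi.basisFun 𝕜 ι).sum_repr w]
  simp

theorem ContDiffOn.matrix_det {n : WithTop ℕ∞} {s : Set E} {M : E → Matrix ι ι 𝕜}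
    (hM : ∀ i j, ContDiffOn 𝕜 n (fun x => M x i j) s) :
    ContDiffOn 𝕜 n (fun x => (M x).det) s := by
  simp only [Matrix.det_apply]
  fun_prop

end

section Dop

variable {d n m : ℕ} (h : m + n = d + 2)
  (Φ : (Fin d → ℝ) → Fin n → ℝ) (φ : (Fin d → ℝ) → Fin m → ℝ)

noncomputable def dopMatrix (y : Fin d → ℝ) (z : Fin n → ℝ) :
    Matrix (Fin (d + 2)) (Fin (d + 2)) ℝ :=
  Matrix.of fun (r c : Fin (d + 2)) =>
    Fin.addCases (motive := fun _ => ℝ)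
      (fun i : Fin m =>
        Fin.cases (0 : ℝ)
          (fun c' : Fin (d + 1) =>
            Fin.cases (0 : ℝ)
              (fun j : Fin d => fderiv ℝ (fun y' => φ y' i) y (Pi.single j 1)) c') c)
      (fun i : Fin n =>
        Fin.cases (z i)
          (fun c' : Fin (d + 1) =>
            Fin.cases (Φ y i)
              (fun j : Fin d => fderiv ℝ (fun y' => Φ y' i) y (Pi.single j 1)) c') c)
      (Fin.cast h.symm r)

theorem Dop_eq_det_dopMatrix (y : Fin d → ℝ) (z : Fin n → ℝ) :
    Dop h Φ φ y z = (dopMatrix h Φ φ y z).det := rfl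

def dopColumn : (Fin n → ℝ) →ₗ[ℝ] Fin (d + 2) → ℝ where
  toFun z r := Fin.append 0 z (Fin.cast h.symm r)
  map_add' z z' := by
    ext r
    rw [Pi.add_apply]
    generalize Fin.cast h.symm r = k
    induction k using Fin.addCases <;> simp
  map_smul' a z := by
    ext r
    rw [Pi.smul_apply]
    generalize Fin.cast h.symm r = k
    induction k using Fin.addCases <;> simp

theorem dopMatrix_eq_updateCol (y : Fin d → ℝ) (z : Fin n → ℝ) :
    dopMatrix h Φ φ y z = (dopMatrix h Φ φ y 0).updateCol 0 (dopColumn h z) := by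
  ext r c
  refine Fin.cases ?_ (fun c => ?_) c
  · simp only [dopMatrix, Matrix.of_apply, Matrix.updateCol_self, Fin.cases_zero]
    rfl
  · simp only [dopMatrix, Matrix.of_apply, Matrix.updateCol_ne (Fin.succ_ne_zero c), Fin.cases_succ]

theorem Dop_add (y : Fin d → ℝ) (z z' : Fin n → ℝ) :
    Dop h Φ φ y (z + z') = Dop h Φ φ y z + Dop h Φ φ y z' := by
  rw [Dop_eq_det_dopMatrix, Dop_eq_det_dopMatrix, Dop_eq_det_dopMatrix,
    dopMatrix_eq_updateCol h Φ φ y z, dopMatrix_eq_updateCol h Φ φ y z',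
    dopMatrix_eq_updateCol h Φ φ y (z + z'), map_add, Matrix.det_updateCol_add]

theorem Dop_smul (y : Fin d → ℝ) (a : ℝ) (z : Fin n → ℝ) :
    Dop h Φ φ y (a • z) = a • Dop h Φ φ y z := by
  rw [Dop_eq_det_dopMatrix, Dop_eq_det_dopMatrix, dopMatrix_eq_updateCol h Φ φ y z,
    dopMatrix_eq_updateCol h Φ φ y (a • z), map_smul, Matrix.det_updateCol_smul, smul_eq_mul]

noncomputable def dopCLM (y : Fin d → ℝ) : (Fin n → ℝ) →L[ℝ] ℝ :=
  LinearMap.toContinuousLinearMap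
    { toFun := Dop h Φ φ y
      map_add' := Dop_add h Φ φ y
      map_smul' := Dop_smul h Φ φ y }

theorem Dop_fderiv_apply_eq_zero (y w : Fin d → ℝ)
    (hw : ∀ i, fderiv ℝ (fun y' => φ y' i) y w = 0) :
    Dop h Φ φ y (fun i => fderiv ℝ (fun y' => Φ y' i) y w) = 0 := by
  -- The kernel vector `(-1, 0, w)` records `column 0 = ∑ k, w k • column (k + 2)`.
  rw [Dop_eq_det_dopMatrix, ← Matrix.exists_mulVec_eq_zero_iff]
  refine ⟨Fin.cons (-1) (Fin.cons 0 w), fun h0 => by simpa using congr_fun h0 0, ?_⟩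
  ext r
  simp only [Matrix.mulVec, dotProduct, Fin.sum_univ_succ, dopMatrix, Matrix.of_apply]
  induction Fin.cast h.symm r using Fin.addCases with
  | left i =>
    simp only [Fin.addCases_left, Fin.cases_zero, Fin.cases_succ, Fin.cons_zero, Fin.cons_succ]
    have hwi := hw i
    rw [ContinuousLinearMap.apply_eq_sum_smul_single _ w] at hwi
    simpa [mul_comm] using hwi
  | right i =>
    simp only [Fin.addCases_right, Fin.cases_zero, Fin.cases_succ, Fin.cons_zero, Fin.cons_succ]
    rw [ContinuousLinearMap.apply_eq_sum_smul_single _ w]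
    simp [mul_comm]

variable {U : Set (Fin d → ℝ)} (hU : IsOpen U)
  (hΦ : ∀ i, ContDiffOn ℝ 2 (fun y => Φ y i) U) (hφ : ∀ i, ContDiffOn ℝ 2 (fun y => φ y i) U)
include hU hΦ hφ

theorem contDiffOn_dopMatrix_apply (z : Fin n → ℝ) (r c : Fin (d + 2)) :
    ContDiffOn ℝ 1 (fun y => dopMatrix h Φ φ y z r c) U := by
  simp only [dopMatrix, Matrix.of_apply]
  induction Fin.cast h.symm r using Fin.addCases with
  | left i =>
    refine Fin.cases ?_ (Fin.cases ?_ fun j => ?_) c <;>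
      simp only [Fin.addCases_left, Fin.cases_zero, Fin.cases_succ]
    exacts [contDiffOn_const, contDiffOn_const, (hφ i).fderiv_apply_of_isOpen hU le_rfl _]
  | right i =>
    refine Fin.cases ?_ (Fin.cases ?_ fun j => ?_) c <;>
      simp only [Fin.addCases_right, Fin.cases_zero, Fin.cases_succ]
    exacts [contDiffOn_const, (hΦ i).of_le one_le_two, (hΦ i).fderiv_apply_of_isOpen hU le_rfl _]

theorem contDiffOn_dopCLM : ContDiffOn ℝ 1 (dopCLM h Φ φ) U :=
  contDiffOn_clm_apply.2 fun z =>
    ContDiffOn.matrix_det (contDiffOn_dopMatrix_apply h Φ φ hU hΦ hφ z)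

end Dop

theorem stmt_8_general (d n m : ℕ) (h : m + n = d + 2)
    (U : Set (Fin d → ℝ)) (hU : IsOpen U)
    (Φ : (Fin d → ℝ) → Fin n → ℝ) (φ : (Fin d → ℝ) → Fin m → ℝ)
    (hΦ : ∀ i, ContDiffOn ℝ 2 (fun y' => Φ y' i) U)
    (hφ : ∀ i, ContDiffOn ℝ 2 (fun y' => φ y' i) U)
    (v w : Fin d → ℝ)
    (hwφ : ∀ y ∈ U, ∀ j, fderiv ℝ (fun y' => φ y' j) y w = 0) :
    ∀ y ∈ U,
      fderiv ℝ (fun y' => Dop h Φ φ y' (fun t => fderiv ℝ (fun y'' => Φ y'' t) y w)) y v =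
        - Dop h Φ φ y
            (fun t => fderiv ℝ (fun y' => fderiv ℝ (fun y'' => Φ y'' t) y' w) y v) := by
  intro y hy
  have hUy : U ∈ 𝓝 y := hU.mem_nhds hy
  have hΦw (t : Fin n) : DifferentiableAt ℝ (fun y' => fderiv ℝ (fun y'' => Φ y'' t) y' w) y :=
    ((hΦ t).fderiv_apply_of_isOpen hU le_rfl w).differentiableOn one_ne_zero
      |>.differentiableAt hUy
  have hL : DifferentiableAt ℝ (dopCLM h Φ φ) y :=
    (contDiffOn_dopCLM h Φ φ hU hΦ hφ).differentiableOn one_ne_zero |>.differentiableAt hUy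
  have hLg : ∀ᶠ y' in 𝓝 y,
      dopCLM h Φ φ y' (fun t => fderiv ℝ (fun y'' => Φ y'' t) y' w) = 0 :=
    eventually_of_mem hUy fun y' hy' => Dop_fderiv_apply_eq_zero h Φ φ y' w (hwφ y' hy')
  have key := fderiv_clm_apply_const_eq_neg hL (differentiableAt_pi.2 hΦw) hLg v
  rwa [fderiv_pi hΦw] at key

/-- For constant-coefficient directions `v = Y_i`, `w = Y_j` annihilating `φ`,
`⟨Y_i(DΦ)(y), Y_jΦ(y)⟩ = −⟨DΦ(y), Y_iY_jΦ(y)⟩` on `U`. -/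
theorem stmt_8 (d n m : ℕ) (h : m + n = d + 2)
    (U : Set (Fin d → ℝ)) (hU : IsOpen U)
    (Φ : (Fin d → ℝ) → Fin n → ℝ) (φ : (Fin d → ℝ) → Fin m → ℝ)
    (hΦ : ∀ i, ContDiffOn ℝ 2 (fun y' => Φ y' i) U)
    (hφ : ∀ i, ContDiffOn ℝ 2 (fun y' => φ y' i) U)
    (v w : Fin d → ℝ)
    (hvφ : ∀ y ∈ U, ∀ j, fderiv ℝ (fun y' => φ y' j) y v = 0)
    (hwφ : ∀ y ∈ U, ∀ j, fderiv ℝ (fun y' => φ y' j) y w = 0) :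
    ∀ y ∈ U,
      fderiv ℝ (fun y' => Dop h Φ φ y' (fun t => fderiv ℝ (fun y'' => Φ y'' t) y w)) y v =
        - Dop h Φ φ y
            (fun t => fderiv ℝ (fun y' => fderiv ℝ (fun y'' => Φ y'' t) y' w) y v) :=
  stmt_8_general d n m h U hU Φ φ hΦ hφ v w hwφ
end

section
/- Let U ⊂ ℝⁿ × ℝⁿ be open, let ρ_i : U → ℝ^{k_i} (i = 1,…,m, Σk_i = n) and η : U → ℝ^d be C¹, and define Ψ(x, y₁,…,y_m) := (ρ₁(x,y₁),…,ρ_m(x,y_m), η(x,y₁),…,η(x,y_m)) on U* := {(x,y₁,…,y_m) : (x,y_i) ∈ U for all i}. At any point where each d×d matrix ∂_yη(x,y_i) is invertible, the Jacobian determinant of Ψ satisfies |det DΨ| = |det(Ψ₁(x,y₁); …; Ψ_m(x,y_m))| · Π_{i=1}^m |det ∂_yη(x,y_i)|, where Ψ_j(x,y) := ∂_xρ_j(x,y) − ∂_yρ_j(x,y)(∂_yη(x,y))^{−1}∂_xη(x,y) and (Ψ₁;…;Ψ_m) denotes the n×n matrix obtained by stacking the k_i×n blocks Ψ_i. -/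
/-!
After reordering rows and columns, `DΨ` is the block matrix `[[A, B], [C, D]]` in which `A` and
`C` stack the `x`-Jacobians `∂ₓρᵢ(x, yᵢ)` and `∂ₓη(x, yᵢ)`, while `B` and `D` are block diagonal
with blocks `∂_yρᵢ(x, yᵢ)` and `∂_yη(x, yᵢ)`, because `yᵢ` enters only the `i`-th `ρ`- and
`η`-components. Since `D` is invertible, `det DΨ = det D · det (A - B D⁻¹ C)`, and as `D⁻¹` is
again block diagonal, the Schur complement `A - B D⁻¹ C` stacks the matrices `Ψᵢ`.
-/

open Matrix

section PartialDerivatives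

variable {𝕜 E F G : Type*} [NontriviallyNormedField 𝕜] [NormedAddCommGroup E] [NormedSpace 𝕜 E]
  [NormedAddCommGroup F] [NormedSpace 𝕜 F] [NormedAddCommGroup G] [NormedSpace 𝕜 G]
  {f : E × F → G} {x : E}

theorem DifferentiableAt.fderiv_apply_left {z : F} (hf : DifferentiableAt 𝕜 f (x, z)) (v : E) :
    fderiv 𝕜 f (x, z) (v, 0) = fderiv 𝕜 (fun x' => f (x', z)) x v :=
  (DFunLike.congr_fun
    (hf.hasFDerivAt.comp x (hasFDerivAt_prodMk_left (𝕜 := 𝕜) x z)).fderiv v).symm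

theorem DifferentiableAt.fderiv_apply_right {z : F} (hf : DifferentiableAt 𝕜 f (x, z)) (w : F) :
    fderiv 𝕜 f (x, z) (0, w) = fderiv 𝕜 (fun z' => f (x, z')) z w :=
  (DFunLike.congr_fun (hf.hasFDerivAt.comp z (hasFDerivAt_prodMk_right x z)).fderiv w).symm

theorem DifferentiableAt.fderiv_comp_eval_snd_apply {ι : Type*} [Fintype ι] {y : ι → F} {i : ι}
    (hf : DifferentiableAt 𝕜 f (x, y i)) (v : E) (w : ι → F) :
    fderiv 𝕜 (fun p : E × (ι → F) => f (p.1, p.2 i)) (x, y) (v, w) =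
      fderiv 𝕜 f (x, y i) (v, w i) := by
  let L : E × (ι → F) →L[𝕜] E × F :=
    (ContinuousLinearMap.fst 𝕜 E (ι → F)).prod
      ((ContinuousLinearMap.proj i).comp (ContinuousLinearMap.snd 𝕜 E (ι → F)))
  rw [show (fun p : E × (ι → F) => f (p.1, p.2 i)) = f ∘ L from rfl,
    (hf.hasFDerivAt.comp (x, y) L.hasFDerivAt).fderiv]
  rfl

end PartialDerivatives

namespace Matrix

variable {o n α : Type*} {m' n' : o → Type*}

def stackRows (M : ∀ i, Matrix (m' i) n α) : Matrix (Σ i, m' i) n α :=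
  of fun r c => M r.1 r.2 c

@[simp]
theorem stackRows_apply (M : ∀ i, Matrix (m' i) n α) (i : o) (a : m' i) (c : n) :
    stackRows M ⟨i, a⟩ c = M i a c :=
  rfl

theorem blockDiagonal'_mul_stackRows [Fintype o] [DecidableEq o] [∀ i, Fintype (n' i)]
    [NonUnitalNonAssocSemiring α] {p : Type*}
    (M : ∀ i, Matrix (m' i) (n' i) α) (N : ∀ i, Matrix (n' i) p α) :
    blockDiagonal' M * stackRows N = stackRows fun i => M i * N i := by
  ext ⟨i, a⟩ c
  simp only [mul_apply, ← Finset.univ_sigma_univ, Finset.sum_sigma, stackRows_apply]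
  rw [Fintype.sum_eq_single i fun j hj => Finset.sum_eq_zero fun b _ => by
    rw [blockDiagonal'_apply_ne _ _ _ (Ne.symm hj), zero_mul]]
  simp only [blockDiagonal'_apply_eq]

theorem blockDiagonal'_mul_blockDiagonal'_inv [Fintype o] [DecidableEq o]
    [∀ i, Fintype (m' i)] [∀ i, DecidableEq (m' i)] [CommRing α]
    (M : ∀ i, Matrix (m' i) (m' i) α) (hM : ∀ i, IsUnit (M i).det) :
    blockDiagonal' M * blockDiagonal' (fun i => (M i)⁻¹) = 1 := by
  rw [← blockDiagonal'_mul]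
  simp only [mul_nonsing_inv _ (hM _)]
  exact blockDiagonal'_one

theorem det_blockDiagonal'_const [Fintype o] [DecidableEq o] [Fintype n] [DecidableEq n]
    [CommRing α] (M : o → Matrix n n α) :
    (blockDiagonal' M).det = ∏ i, (M i).det := by
  let σ : n × o ≃ Σ _ : o, n := (Equiv.prodComm n o).trans (Equiv.sigmaEquivProd o n).symm
  rw [← det_submatrix_equiv_self σ, ← det_blockDiagonal]
  rfl

theorem det_fromBlocks_stackRows_blockDiagonal' [Fintype o] [DecidableEq o] [Fintype n]
    [DecidableEq n] [∀ i, Fintype (n' i)] [∀ i, DecidableEq (n' i)] [CommRing α]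
    (e : n ≃ Σ i, m' i) (A : ∀ i, Matrix (m' i) n α) (B : ∀ i, Matrix (m' i) (n' i) α)
    (C : ∀ i, Matrix (n' i) n α) (D : ∀ i, Matrix (n' i) (n' i) α)
    (hD : ∀ i, IsUnit (D i).det) :
    ((fromBlocks (stackRows A) (blockDiagonal' B) (stackRows C) (blockDiagonal' D)).submatrix
        (Sum.map e id) id).det =
      (blockDiagonal' D).det *
        ((stackRows fun i => A i - B i * (D i)⁻¹ * C i).submatrix e id).det := by
  let _ : Invertible (blockDiagonal' D) :=
    invertibleOfRightInverse _ _ (blockDiagonal'_mul_blockDiagonal'_inv D hD)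
  have hblocks : (fromBlocks (stackRows A) (blockDiagonal' B) (stackRows C)
      (blockDiagonal' D)).submatrix (Sum.map e id) id = fromBlocks ((stackRows A).submatrix e id)
        ((blockDiagonal' B).submatrix e id) (stackRows C) (blockDiagonal' D) := by
    ext (_ | _) (_ | _) <;> rfl
  rw [hblocks, det_fromBlocks₂₂]
  congr 2
  show _ = (stackRows A - stackRows fun i => B i * (D i)⁻¹ * C i).submatrix e id
  rw [← blockDiagonal'_mul_stackRows, blockDiagonal'_mul]
  rfl

end Matrix

noncomputable def jacobianMatrix {𝕜 ι κ : Type*} [NontriviallyNormedField 𝕜] [Fintype ι]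
    [DecidableEq ι] (f : (ι → 𝕜) → κ → 𝕜) (x : ι → 𝕜) : Matrix κ ι 𝕜 :=
  of fun a c => fderiv 𝕜 (fun x' => f x' a) x (Pi.single c 1)

theorem jacobian_eq_submatrix_fromBlocks {𝕜 : Type*} [NontriviallyNormedField 𝕜] {n d m : ℕ}
    {k : Fin m → ℕ}
    (ρ : ∀ i : Fin m, (Fin n → 𝕜) → (Fin d → 𝕜) → Fin (k i) → 𝕜)
    (η : (Fin n → 𝕜) → (Fin d → 𝕜) → Fin d → 𝕜)
    (x : Fin n → 𝕜) (y : Fin m → Fin d → 𝕜)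
    (hρ : ∀ i a, DifferentiableAt 𝕜
      (fun q : (Fin n → 𝕜) × (Fin d → 𝕜) => ρ i q.1 q.2 a) (x, y i))
    (hη : ∀ i t, DifferentiableAt 𝕜
      (fun q : (Fin n → 𝕜) × (Fin d → 𝕜) => η q.1 q.2 t) (x, y i))
    (e : (Fin n ⊕ Fin m × Fin d) ≃ ((Σ i : Fin m, Fin (k i)) ⊕ Fin m × Fin d)) :
    (Matrix.of fun (r c : Fin n ⊕ Fin m × Fin d) =>
          fderiv 𝕜
            (fun p : (Fin n → 𝕜) × (Fin m → Fin d → 𝕜) =>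
              Sum.elim (fun ia : Σ i : Fin m, Fin (k i) => ρ ia.1 p.1 (p.2 ia.1) ia.2)
                (fun it : Fin m × Fin d => η p.1 (p.2 it.1) it.2) (e r))
            (x, y)
            (Sum.elim
              (fun j : Fin n => ((Pi.single j 1 : Fin n → 𝕜), (0 : Fin m → Fin d → 𝕜)))
              (fun it : Fin m × Fin d =>
                ((0 : Fin n → 𝕜), Pi.single it.1 (Pi.single it.2 1))) c)) =
      (fromBlocks (stackRows fun i => jacobianMatrix (fun x' => ρ i x' (y i)) x)
          (blockDiagonal' fun i => jacobianMatrix (ρ i x) (y i))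
          (stackRows fun i => jacobianMatrix (fun x' => η x' (y i)) x)
          (blockDiagonal' fun i => jacobianMatrix (η x) (y i))).submatrix
        (e.trans (Equiv.sumCongr (Equiv.refl _) (Equiv.sigmaEquivProd _ _).symm))
        (Equiv.sumCongr (Equiv.refl _) (Equiv.sigmaEquivProd _ _).symm) := by
  ext r c
  rcases he : e r with ⟨i, a⟩ | ⟨i, t⟩ <;> rcases c with j | ⟨l, u⟩ <;>
    simp only [of_apply, submatrix_apply, Equiv.trans_apply, he, Equiv.sumCongr_apply,
      Sum.map_inl, Sum.map_inr, Sum.elim_inl, Sum.elim_inr, Equiv.refl_apply,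
      Equiv.sigmaEquivProd_symm_apply, fromBlocks_apply₁₁, fromBlocks_apply₁₂,
      fromBlocks_apply₂₁, fromBlocks_apply₂₂, stackRows_apply]
  case inl.inl =>
    exact ((hρ i a).fderiv_comp_eval_snd_apply _ _).trans ((hρ i a).fderiv_apply_left _)
  case inr.inl =>
    exact ((hη i t).fderiv_comp_eval_snd_apply _ _).trans ((hη i t).fderiv_apply_left _)
  case inl.inr =>
    rw [(hρ i a).fderiv_comp_eval_snd_apply]
    by_cases h : i = l
    · subst h
      rw [Pi.single_eq_same, blockDiagonal'_apply_eq, (hρ i a).fderiv_apply_right]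
      rfl
    · rw [Pi.single_eq_of_ne h, blockDiagonal'_apply_ne _ _ _ h, Prod.mk_zero_zero, map_zero]
  case inr.inr =>
    rw [(hη i t).fderiv_comp_eval_snd_apply]
    by_cases h : i = l
    · subst h
      rw [Pi.single_eq_same, blockDiagonal'_apply_eq, (hη i t).fderiv_apply_right]
      rfl
    · rw [Pi.single_eq_of_ne h, blockDiagonal'_apply_ne _ _ _ h, Prod.mk_zero_zero, map_zero]

theorem stmt_16_general (n d m : ℕ) (k : Fin m → ℕ)
    (ρ : ∀ i : Fin m, (Fin n → ℝ) → (Fin d → ℝ) → Fin (k i) → ℝ)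
    (η : (Fin n → ℝ) → (Fin d → ℝ) → Fin d → ℝ)
    (x : Fin n → ℝ) (y : Fin m → Fin d → ℝ)
    (hρ : ∀ i a, DifferentiableAt ℝ
      (fun q : (Fin n → ℝ) × (Fin d → ℝ) => ρ i q.1 q.2 a) (x, y i))
    (hη : ∀ i t, DifferentiableAt ℝ
      (fun q : (Fin n → ℝ) × (Fin d → ℝ) => η q.1 q.2 t) (x, y i))
    (Byη : Fin m → Matrix (Fin d) (Fin d) ℝ)
    (hByη : ∀ i t u, Byη i t u = fderiv ℝ (fun y' => η x y' t) (y i) (Pi.single u 1))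
    (hinv : ∀ i, IsUnit (Byη i).det) :
    ∀ (e : (Fin n ⊕ Fin m × Fin d) ≃ ((Σ i : Fin m, Fin (k i)) ⊕ Fin m × Fin d))
      (e₂ : Fin n ≃ (Σ i : Fin m, Fin (k i))),
      |Matrix.det (Matrix.of fun (r c : Fin n ⊕ Fin m × Fin d) =>
          fderiv ℝ
            (fun p : (Fin n → ℝ) × (Fin m → Fin d → ℝ) =>
              Sum.elim (fun ia : Σ i : Fin m, Fin (k i) => ρ ia.1 p.1 (p.2 ia.1) ia.2)
                (fun it : Fin m × Fin d => η p.1 (p.2 it.1) it.2) (e r))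
            (x, y)
            (Sum.elim
              (fun j : Fin n => ((Pi.single j 1 : Fin n → ℝ), (0 : Fin m → Fin d → ℝ)))
              (fun it : Fin m × Fin d =>
                ((0 : Fin n → ℝ), Pi.single it.1 (Pi.single it.2 1))) c))| =
      |Matrix.det (Matrix.of fun (r c : Fin n) =>
          ((fun i : Fin m =>
              (Matrix.of fun (a : Fin (k i)) (c' : Fin n) =>
                  fderiv ℝ (fun x' => ρ i x' (y i) a) x (Pi.single c' 1))
                - (Matrix.of fun (a : Fin (k i)) (t : Fin d) =>
                    fderiv ℝ (fun y' => ρ i x y' a) (y i) (Pi.single t 1))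
                  * (Byη i)⁻¹
                  * (Matrix.of fun (t : Fin d) (c' : Fin n) =>
                      fderiv ℝ (fun x' => η x' (y i) t) x (Pi.single c' 1)))
            (e₂ r).1 (e₂ r).2 c))| *
      ∏ i, |Matrix.det (Byη i)| := by
  intro e e₂
  obtain rfl : Byη = fun i => jacobianMatrix (η x) (y i) :=
    funext fun i => Matrix.ext (hByη i)
  rw [jacobian_eq_submatrix_fromBlocks ρ η x y hρ hη e]
  set τ := Equiv.sumCongr (Equiv.refl (Fin n)) (Equiv.sigmaEquivProd (Fin m) (Fin d)).symm
  let σ := e.trans (Equiv.sumCongr e₂.symm (Equiv.sigmaEquivProd (Fin m) (Fin d)).symm)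
  have hrows : ⇑(e.trans (Equiv.sumCongr (Equiv.refl _) (Equiv.sigmaEquivProd _ _).symm)) =
      Sum.map e₂ id ∘ σ := by
    funext r
    rcases e r with _ | _ <;> simp [σ]
  rw [hrows, ← Function.id_comp ⇑τ, ← submatrix_submatrix, abs_det_submatrix_equiv_equiv σ,
    det_fromBlocks_stackRows_blockDiagonal' e₂ _ _ _ _ hinv, det_blockDiagonal'_const, abs_mul,
    Finset.abs_prod, mul_comm]
  rfl

/-- Block computation of the Jacobian of
`Ψ(x,y₁,…,y_m) = (ρ₁(x,y₁),…,ρ_m(x,y_m), η(x,y₁),…,η(x,y_m))`: at a point where each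
`∂_yη(x,y_i)` is invertible,
`|det DΨ| = |det(Ψ₁(x,y₁);…;Ψ_m(x,y_m))| · ∏ᵢ |det ∂_yη(x,y_i)|`, where
`Ψ_j := ∂_xρ_j − ∂_yρ_j (∂_yη)⁻¹ ∂_xη`.  (The absolute value of the determinant is
independent of the choice of the index-matching equivalences `e`, `e₂`.) -/
theorem stmt_16 (n d m : ℕ) (k : Fin m → ℕ) (hk : ∑ i, k i = n)
    (U : Set ((Fin n → ℝ) × (Fin d → ℝ)))
    (ρ : ∀ i : Fin m, (Fin n → ℝ) → (Fin d → ℝ) → Fin (k i) → ℝ)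
    (η : (Fin n → ℝ) → (Fin d → ℝ) → Fin d → ℝ)
    (x : Fin n → ℝ) (y : Fin m → Fin d → ℝ)
    (hmem : ∀ i, (x, y i) ∈ U)
    (hρ : ∀ i a, DifferentiableAt ℝ
      (fun q : (Fin n → ℝ) × (Fin d → ℝ) => ρ i q.1 q.2 a) (x, y i))
    (hη : ∀ i t, DifferentiableAt ℝ
      (fun q : (Fin n → ℝ) × (Fin d → ℝ) => η q.1 q.2 t) (x, y i))
    (Byη : Fin m → Matrix (Fin d) (Fin d) ℝ)
    (hByη : ∀ i t u, Byη i t u = fderiv ℝ (fun y' => η x y' t) (y i) (Pi.single u 1))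
    (hinv : ∀ i, IsUnit (Byη i).det) :
    ∀ (e : (Fin n ⊕ Fin m × Fin d) ≃ ((Σ i : Fin m, Fin (k i)) ⊕ Fin m × Fin d))
      (e₂ : Fin n ≃ (Σ i : Fin m, Fin (k i))),
      |Matrix.det (Matrix.of fun (r c : Fin n ⊕ Fin m × Fin d) =>
          fderiv ℝ
            (fun p : (Fin n → ℝ) × (Fin m → Fin d → ℝ) =>
              Sum.elim (fun ia : Σ i : Fin m, Fin (k i) => ρ ia.1 p.1 (p.2 ia.1) ia.2)
                (fun it : Fin m × Fin d => η p.1 (p.2 it.1) it.2) (e r))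
            (x, y)
            (Sum.elim
              (fun j : Fin n => ((Pi.single j 1 : Fin n → ℝ), (0 : Fin m → Fin d → ℝ)))
              (fun it : Fin m × Fin d =>
                ((0 : Fin n → ℝ), Pi.single it.1 (Pi.single it.2 1))) c))| =
      |Matrix.det (Matrix.of fun (r c : Fin n) =>
          ((fun i : Fin m =>
              (Matrix.of fun (a : Fin (k i)) (c' : Fin n) =>
                  fderiv ℝ (fun x' => ρ i x' (y i) a) x (Pi.single c' 1))
                - (Matrix.of fun (a : Fin (k i)) (t : Fin d) =>
                    fderiv ℝ (fun y' => ρ i x y' a) (y i) (Pi.single t 1))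
                  * (Byη i)⁻¹
                  * (Matrix.of fun (t : Fin d) (c' : Fin n) =>
                      fderiv ℝ (fun x' => η x' (y i) t) x (Pi.single c' 1)))
            (e₂ r).1 (e₂ r).2 c))| *
      ∏ i, |Matrix.det (Byη i)| :=
  stmt_16_general n d m k ρ η x y hρ hη Byη hByη hinv
end
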